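/- If ω̂ minimizes the weighted lasso objective f over ℝ^m and z = y − A ω̂ denotes the residual, then yᵀ z = ‖z‖₂² + n λ ∑_{k=1}^m w_k |ω̂_k|. In particular yᵀ z ≥ ‖z‖₂², and if z ≠ 0 then ‖z‖₂ / (yᵀ z) ≤ 1/‖z‖₂. -/
import Mathlib

noncomputable section

open Finset Matrix

def weightedLassoObj {n m : ℕ} (A : Matrix (Fin n) (Fin m) ℝ) (y : Fin n → ℝ)
    (lam : ℝ) (w : Fin m → ℝ) (b : Fin m → ℝ) : ℝ :=
  (2 * n : ℝ)⁻¹ * ∑ i, (y i - A.mulVec b i) ^ 2 + lam * ∑ k, w k * |b k|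

theorem weightedLasso_residual_identity {n m : ℕ} (A : Matrix (Fin n) (Fin m) ℝ)
    (y : Fin n → ℝ) (lam : ℝ) (hlam : 0 < lam) (w : Fin m → ℝ) (hw : ∀ k, 0 ≤ w k)
    (ωhat : Fin m → ℝ)
    (hmin : ∀ b : Fin m → ℝ, weightedLassoObj A y lam w ωhat ≤ weightedLassoObj A y lam w b) :
    (∑ i, y i * (y i - A.mulVec ωhat i))
        = (∑ i, (y i - A.mulVec ωhat i) ^ 2) + (n : ℝ) * lam * ∑ k, w k * |ωhat k| ∧
    (∑ i, (y i - A.mulVec ωhat i) ^ 2) ≤ ∑ i, y i * (y i - A.mulVec ωhat i) ∧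
    (y - A.mulVec ωhat ≠ 0 →
      Real.sqrt (∑ i, (y i - A.mulVec ωhat i) ^ 2) / (∑ i, y i * (y i - A.mulVec ωhat i))
        ≤ 1 / Real.sqrt (∑ i, (y i - A.mulVec ωhat i) ^ 2)) := by
  classical
  set u : Fin n → ℝ := A.mulVec ωhat with hu
  set S : ℝ := ∑ k, w k * |ωhat k| with hSdef
  set Q : ℝ := ∑ i, (y i - u i) ^ 2 with hQdef
  set P : ℝ := ∑ i, (y i - u i) * u i with hPdef
  set R : ℝ := ∑ i, u i ^ 2 with hRdef
  have hS : 0 ≤ S := Finset.sum_nonneg fun k _ => mul_nonneg (hw k) (abs_nonneg _)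
  have hQnn : 0 ≤ Q := Finset.sum_nonneg fun i _ => sq_nonneg _
  have hRnn : 0 ≤ R := Finset.sum_nonneg fun i _ => sq_nonneg _
  -- main identity P = n * lam * S
  have hP : P = (n : ℝ) * lam * S := by
    rcases Nat.eq_zero_or_pos n with hn | hn
    · subst hn
      rw [hPdef]
      simp
    · have hn' : (0 : ℝ) < n := Nat.cast_pos.mpr hn
      set c : ℝ := (2 * n : ℝ)⁻¹ with hcdef
      have hcpos : 0 < c := by rw [hcdef]; positivity
      have hineq : ∀ ε : ℝ, -1 ≤ ε →
          0 ≤ c * (ε ^ 2 * R) - 2 * ε * (c * P - lam * S / 2) := by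
        intro ε hε
        have h := hmin ((1 + ε) • ωhat)
        have hobj : weightedLassoObj A y lam w ωhat = c * Q + lam * S := by
          unfold weightedLassoObj
          rw [← hu, ← hQdef, ← hSdef, ← hcdef]
        have hscale : weightedLassoObj A y lam w ((1 + ε) • ωhat)
            = c * (Q - 2 * ε * P + ε ^ 2 * R) + lam * ((1 + ε) * S) := by
          unfold weightedLassoObj
          rw [Matrix.mulVec_smul, ← hu, ← hcdef]
          congr 1
          · congr 1
            have hterm : ∀ i : Fin n, (y i - ((1 + ε) • u) i) ^ 2
                = (y i - u i) ^ 2 - 2 * ε * ((y i - u i) * u i) + ε ^ 2 * u i ^ 2 := by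
              intro i; simp only [Pi.smul_apply, smul_eq_mul]; ring
            rw [Finset.sum_congr rfl fun i _ => hterm i, Finset.sum_add_distrib,
              Finset.sum_sub_distrib, ← Finset.mul_sum, ← Finset.mul_sum,
              ← hQdef, ← hPdef, ← hRdef]
          · have hterm : ∀ k : Fin m, w k * |((1 + ε) • ωhat) k|
                = (1 + ε) * (w k * |ωhat k|) := by
              intro k
              simp only [Pi.smul_apply, smul_eq_mul, abs_mul,
                abs_of_nonneg (by linarith : (0:ℝ) ≤ 1 + ε)]
              ring
            rw [Finset.sum_congr rfl fun k _ => hterm k, ← Finset.mul_sum, ← hSdef]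
        rw [hobj, hscale] at h
        ring_nf at h ⊢ <;> linarith
      set D : ℝ := c * P - lam * S / 2 with hDdef
      have hcR : 0 ≤ c * R := mul_nonneg hcpos.le hRnn
      have hDbound : ∀ ε : ℝ, 0 < ε → ε ≤ 1 → |D| ≤ ε * (c * R) := by
        intro ε hε hε1
        have h1 := hineq ε (by linarith)
        have h2 := hineq (-ε) (by linarith)
        rw [abs_le]
        constructor
        · nlinarith
        · nlinarith
      have hDabs : |D| ≤ 0 := by
        apply le_of_forall_pos_le_add
        intro δ hδ
        have hden : (0 : ℝ) < c * R + 1 := by linarith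
        set ε : ℝ := min 1 (δ / (c * R + 1)) with hεdef
        have hεpos : 0 < ε := lt_min one_pos (div_pos hδ hden)
        have hε1 : ε ≤ 1 := min_le_left _ _
        calc |D| ≤ ε * (c * R) := hDbound ε hεpos hε1
          _ ≤ (δ / (c * R + 1)) * (c * R) :=
              mul_le_mul_of_nonneg_right (min_le_right _ _) hcR
          _ ≤ 0 + δ := by
              rw [zero_add, div_mul_eq_mul_div, div_le_iff₀ hden]
              nlinarith
      have hD0 : D = 0 := abs_nonpos_iff.mp hDabs
      have h2nc : (2 * (n : ℝ)) * c = 1 := by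
        rw [hcdef]; field_simp
      have hcP : c * P = lam * S / 2 := by
        have := hD0; rw [hDdef] at this; linarith
      calc P = ((2 * (n : ℝ)) * c) * P := by rw [h2nc]; ring
        _ = (2 * (n : ℝ)) * (c * P) := by ring
        _ = (2 * (n : ℝ)) * (lam * S / 2) := by rw [hcP]
        _ = (n : ℝ) * lam * S := by ring
  have hyz : ∑ i, y i * (y i - u i) = Q + P := by
    rw [hQdef, hPdef, ← Finset.sum_add_distrib]
    exact Finset.sum_congr rfl fun i _ => by ring
  have hnlS : 0 ≤ (n : ℝ) * lam * S :=
    mul_nonneg (mul_nonneg (Nat.cast_nonneg n) hlam.le) hS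
  refine ⟨by rw [hyz, hP], by linarith [hyz, hP], ?_⟩
  intro hz
  have hQpos : 0 < Q := by
    rcases Function.ne_iff.mp hz with ⟨i, hi⟩
    have hzi : y i - u i ≠ 0 := by simpa [Pi.sub_apply] using hi
    rw [hQdef]
    exact Finset.sum_pos' (fun j _ => sq_nonneg _)
      ⟨i, Finset.mem_univ i, by positivity⟩
  have hT : 0 < ∑ i, y i * (y i - u i) := by rw [hyz, hP]; linarith
  rw [div_le_div_iff₀ hT (Real.sqrt_pos.mpr hQpos), Real.mul_self_sqrt hQnn, hyz, hP]
  linarith
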